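/- arXiv:2311.08595 — 2 statements merged into one kernel-verified Lean document; each statement's English description precedes it below -/
import Mathlib

section
/- For every nonempty finite subset e ⊆ V with |e| ≤ N and every v ∈ e, the tuples in β(e) whose first coordinate equals v make up exactly a 1/|e| fraction of β(e); precisely, |e| · |{i ∈ β(e) : i_1 = v}| = |β(e)|. -/
/-- The set of ordered blowups of a finite subset `e` of the vertex set `V`:
all `N`-tuples of vertices whose set of entries is exactly `e`. -/
def blowups (V : Type*) [Fintype V] [DecidableEq V] (N : ℕ) (e : Finset V) :
    Finset (Fin N → V) :=
  Finset.univ.filter (fun i => ∀ v : V, v ∈ e ↔ ∃ k : Fin N, i k = v)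

/-! Swapping two vertices of `e` permutes `β(e)` and exchanges the tuples with a given
coordinate equal to one of them with those where it equals the other, so all fibres of a
coordinate map `β(e) → e` have the same size. -/

section Blowups

variable {V : Type*} [Fintype V] [DecidableEq V] {N : ℕ} {e : Finset V}

theorem mem_blowups {i : Fin N → V} : i ∈ blowups V N e ↔ Set.range i = e := by
  simp [blowups, Set.ext_iff, eq_comm, iff_comm]

theorem comp_mem_blowups {σ : V → V} (hσ : σ '' e = e) {i : Fin N → V}
    (hi : i ∈ blowups V N e) : σ ∘ i ∈ blowups V N e := by
  rw [mem_blowups] at hi ⊢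
  rw [Set.range_comp, hi, hσ]

theorem apply_mem_of_mem_blowups {i : Fin N → V} (hi : i ∈ blowups V N e) (k : Fin N) :
    i k ∈ e := by
  rw [← Finset.mem_coe, ← mem_blowups.mp hi]
  exact Set.mem_range_self k

theorem card_filter_blowups_apply_eq (k : Fin N) {v w : V} (hv : v ∈ e) (hw : w ∈ e) :
    ((blowups V N e).filter (fun i => i k = v)).card =
      ((blowups V N e).filter (fun i => i k = w)).card := by
  have hswap : Equiv.swap v w '' e = e :=
    (Equiv.swap_bijOn_self (by simp [hv, hw])).image_eq
  have hmaps : ∀ {a b : V}, b = Equiv.swap v w a →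
      Set.MapsTo (fun i : Fin N → V => Equiv.swap v w ∘ i)
        ((blowups V N e).filter (fun i => i k = a) : Set (Fin N → V))
        ((blowups V N e).filter (fun i => i k = b)) := by
    rintro a b rfl i hi
    simp only [Finset.coe_filter, Set.mem_ofPred_eq] at hi ⊢
    exact ⟨comp_mem_blowups hswap hi.1, by simp [hi.2]⟩
  refine Finset.card_nbij' _ _ (hmaps (Equiv.swap_apply_left v w).symm)
    (hmaps (Equiv.swap_apply_right v w).symm) ?_ ?_ <;>
  · intro i _
    ext k
    simp

theorem card_blowups_eq_card_mul_card_filter (k : Fin N) {v : V} (hv : v ∈ e) :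
    (blowups V N e).card = e.card * ((blowups V N e).filter (fun i => i k = v)).card := by
  rw [Finset.card_eq_sum_card_fiberwise fun i hi => apply_mem_of_mem_blowups hi k,
    Finset.sum_congr rfl fun w hw => card_filter_blowups_apply_eq k hw hv,
    Finset.sum_const, smul_eq_mul]

end Blowups

/-- For every nonempty `e ⊆ V` with `|e| ≤ N` and every `v ∈ e`, the tuples in
`β(e)` whose first coordinate equals `v` make up exactly a `1/|e|` fraction of
`β(e)`: `|e| ⬝ |{i ∈ β(e) : i₁ = v}| = |β(e)|`. -/
theorem blowups_first_coord_fraction (V : Type*) [Fintype V] [DecidableEq V]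
    (N : ℕ) (hN : 2 ≤ N) (e : Finset V)
    (v : V) (hv : v ∈ e) :
    e.card * ((blowups V N e).filter (fun i => i ⟨0, by omega⟩ = v)).card =
      (blowups V N e).card :=
  (card_blowups_eq_card_mul_card_filter _ hv).symm
end

section
/- Let e ⊆ V be a finite subset with 2 ≤ |e| ≤ N, let v ∈ e, and let b : V → ℝ. Then the sum, over all (N−1)-tuples (i_2, …, i_N) ∈ e^{N−1} such that every element of e ∖ {v} occurs among i_2, …, i_N, of the products ∏_{k=2}^{N} b(i_k), equals (N−1)! times the coefficient of X^{N−1} in the formal power series exp(b(v)·X) · ∏_{u ∈ e∖{v}} (exp(b(u)·X) − 1) over ℝ. -/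
/-!
Expanding the product, `e^{b(v)X} ∏_{u ∈ e∖{v}} (e^{b(u)X} - 1)` is
`∑_{t ⊆ e∖{v}} (-1)^|t| e^{(∑_{x ∈ e∖t} b x) X}`, so `(N-1)!` times its coefficient of `X^{N-1}` is
`∑_t (-1)^|t| (∑_{x ∈ e∖t} b x)^{N-1}`. The power `(∑_{x ∈ e∖t} b x)^{N-1}` is the sum of
`∏ b(i_k)` over the tuples with entries in `e ∖ t`, so this alternating sum is inclusion–exclusion
for the tuples with entries in `e` that miss no element of `e ∖ {v}`.
-/

open Finset PowerSeries Nat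

namespace PowerSeries

variable {A : Type*} [CommRing A] [Algebra ℚ A]

theorem prod_rescale_exp {ι : Type*} (s : Finset ι) (a : ι → A) :
    ∏ i ∈ s, rescale (a i) (exp A) = rescale (∑ i ∈ s, a i) (exp A) := by
  induction s using Finset.cons_induction with
  | empty => simp
  | cons i s hi ih => rw [prod_cons, sum_cons, ih, exp_mul_exp_eq_exp_add]

theorem factorial_mul_coeff_rescale_exp (n : ℕ) (a : A) :
    (n ! : A) * coeff n (rescale a (exp A)) = a ^ n := by
  rw [coeff_rescale, coeff_exp, mul_left_comm, ← map_natCast (algebraMap ℚ A), ← map_mul,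
    mul_one_div_cancel (by exact_mod_cast n.factorial_ne_zero), map_one, mul_one]

theorem rescale_exp_mul_prod_rescale_exp_sub_one {ι : Type*} [DecidableEq ι] (a : A)
    (b : ι → A) (s : Finset ι) :
    rescale a (exp A) * ∏ i ∈ s, (rescale (b i) (exp A) - 1) =
      ∑ t ∈ s.powerset, (-1 : ℤ) ^ #t • rescale (a + ∑ i ∈ s \ t, b i) (exp A) := by
  simp only [prod_sub, prod_const_one, mul_one, mul_sum]
  refine sum_congr rfl fun t _ => ?_
  rw [prod_rescale_exp, mul_left_comm, exp_mul_exp_eq_exp_add, zsmul_eq_mul]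
  push_cast
  rfl

theorem factorial_mul_coeff_rescale_exp_mul_prod_rescale_exp_sub_one {ι : Type*}
    [DecidableEq ι] (n : ℕ) (a : A) (b : ι → A) (s : Finset ι) :
    (n ! : A) * coeff n (rescale a (exp A) * ∏ i ∈ s, (rescale (b i) (exp A) - 1)) =
      ∑ t ∈ s.powerset, (-1 : ℤ) ^ #t • (a + ∑ i ∈ s \ t, b i) ^ n := by
  simp only [rescale_exp_mul_prod_rescale_exp_sub_one, map_sum, map_zsmul, mul_sum,
    mul_smul_comm, factorial_mul_coeff_rescale_exp]

end PowerSeries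

section Tuples

variable {ι V R : Type*} [Fintype ι] [DecidableEq ι] [Fintype V] [DecidableEq V] [CommRing R]

theorem sum_prod_tuples_mem_eq_pow (s : Finset V) (b : V → R) :
    ∑ j ∈ univ.filter (fun j : ι → V => ∀ k, j k ∈ s), ∏ k, b (j k) =
      (∑ x ∈ s, b x) ^ Fintype.card ι := by
  rw [← Finset.card_univ, ← prod_const, prod_univ_sum]
  congr 1
  ext j
  simp

theorem inclusion_exclusion_sum_prod_tuples (e s : Finset V) (b : V → R)
    [DecidablePred fun j : ι → V => (∀ k, j k ∈ e) ∧ ∀ u ∈ s, ∃ k, j k = u] :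
    ∑ j ∈ univ.filter (fun j : ι → V => (∀ k, j k ∈ e) ∧ ∀ u ∈ s, ∃ k, j k = u),
      ∏ k, b (j k) =
    ∑ t ∈ s.powerset, (-1 : ℤ) ^ #t • (∑ x ∈ e \ t, b x) ^ Fintype.card ι := by
  let avoiding (u : V) : Finset (ι → V) := univ.filter fun j => ∀ k, j k ≠ u
  have key := inclusion_exclusion_sum_inf_compl s avoiding
    (fun j => if ∀ k, j k ∈ e then ∏ k, b (j k) else 0)
  simp only [← sum_filter] at key
  have hcover : univ.filter (fun j : ι → V => (∀ k, j k ∈ e) ∧ ∀ u ∈ s, ∃ k, j k = u) =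
      (s.inf fun u => (avoiding u)ᶜ).filter fun j => ∀ k, j k ∈ e := by
    ext j
    simp [avoiding, mem_inf, and_comm]
  have havoid (t : Finset V) : (t.inf avoiding).filter (fun j => ∀ k, j k ∈ e) =
      univ.filter fun j : ι → V => ∀ k, j k ∈ e \ t := by
    ext j
    simp only [avoiding, mem_filter, mem_inf, mem_univ, true_and, mem_sdiff]
    grind
  simp only [hcover, key, havoid, sum_prod_tuples_mem_eq_pow]

end Tuples

theorem sum_tail_tuples_eq_coeff_general (V : Type*) [Fintype V] [DecidableEq V]
    (N : ℕ) (e : Finset V)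
    (v : V) (hv : v ∈ e) (b : V → ℝ) :
    ∑ j ∈ Finset.univ.filter
        (fun j : Fin (N - 1) → V =>
          (∀ k, j k ∈ e) ∧ ∀ u ∈ e.erase v, ∃ k, j k = u),
      ∏ k, b (j k) =
    ((N - 1).factorial : ℝ) *
      PowerSeries.coeff (R := ℝ) (N - 1)
        (PowerSeries.rescale (b v) (PowerSeries.exp ℝ) *
          ∏ u ∈ e.erase v,
            (PowerSeries.rescale (b u) (PowerSeries.exp ℝ) - 1)) := by
  rw [inclusion_exclusion_sum_prod_tuples, Fintype.card_fin,
    factorial_mul_coeff_rescale_exp_mul_prod_rescale_exp_sub_one]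
  refine sum_congr rfl fun t ht => ?_
  have hvt : v ∈ e \ t := mem_sdiff.2 ⟨hv, fun hvt => by simpa using mem_powerset.1 ht hvt⟩
  rw [erase_sdiff_comm, add_sum_erase _ _ hvt]

/-- Let `e ⊆ V` with `2 ≤ |e| ≤ N`, `v ∈ e`, `b : V → ℝ`. The sum, over all
`(N−1)`-tuples `(i_2, …, i_N) ∈ e^{N−1}` such that every element of `e ∖ {v}`
occurs among the entries, of `∏_{k=2}^N b(i_k)`, equals `(N−1)!` times the
coefficient of `X^{N−1}` in `exp(b(v)·X) ⬝ ∏_{u ∈ e∖{v}} (exp(b(u)·X) − 1)`. -/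
theorem sum_tail_tuples_eq_coeff (V : Type*) [Fintype V] [DecidableEq V]
    (N : ℕ) (hN : 2 ≤ N) (e : Finset V) (h2 : 2 ≤ e.card) (hcard : e.card ≤ N)
    (v : V) (hv : v ∈ e) (b : V → ℝ) :
    ∑ j ∈ Finset.univ.filter
        (fun j : Fin (N - 1) → V =>
          (∀ k, j k ∈ e) ∧ ∀ u ∈ e.erase v, ∃ k, j k = u),
      ∏ k, b (j k) =
    ((N - 1).factorial : ℝ) *
      PowerSeries.coeff (R := ℝ) (N - 1)
        (PowerSeries.rescale (b v) (PowerSeries.exp ℝ) *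
          ∏ u ∈ e.erase v,
            (PowerSeries.rescale (b u) (PowerSeries.exp ℝ) - 1)) :=
  sum_tail_tuples_eq_coeff_general V N e v hv b
end
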